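/- arXiv:2410.01547 — 5 statements merged into one kernel-verified Lean document; each statement's English description precedes it below -/
import Mathlib

section
/- Let R be a commutative ring, S a commutative R-algebra, and φ: S → S a ring endomorphism with φ(R) ⊆ R (i.e. φ restricts to an endomorphism of R). Let I ⊆ R be the ideal of R generated by {c - φ(c) | c ∈ R}. Then the map θ: S → (S ⊗_R S)/J(S ⊗_R S), f ↦ f ⊗ 1, where J is the ideal generated by elements of the form 1 ⊗ χ - φ(χ) ⊗ 1 for χ ranging over units of S of a generating set, is surjective with kernel I·S, provided S is generated as a ring by the units χ appearing. -/
open TensorProduct in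
/-- Abstract form of Proposition `prop-torus-action-quotient-4`: `R` a commutative ring,
`S` a commutative `R`-algebra generated as a ring by a set `U` of units, `φ : S → S`
an endomorphism restricting to `φR` on `R`.  With `J ⊆ S ⊗_R S` the ideal generated by
`1 ⊗ χ - φ(χ) ⊗ 1` for `χ ∈ U`, and `I ⊆ R` the ideal generated by `{c - φ(c)}`,
the map `θ : S → (S ⊗_R S)/J`, `f ↦ f ⊗ 1`, is surjective with kernel `I·S`. -/
theorem theta_surjective_kernel
    (R S : Type*) [CommRing R] [CommRing S] [Algebra R S]
    (φ : S →+* S) (φR : R →+* R)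
    (hφ : ∀ r : R, φ (algebraMap R S r) = algebraMap R S (φR r))
    (U : Set Sˣ)
    (hgen : Subring.closure ((fun u : Sˣ => (u : S)) '' U) = ⊤)
    (J : Ideal (S ⊗[R] S))
    (hJ : J = Ideal.span
      {x : S ⊗[R] S | ∃ χ ∈ U, x = (1 : S) ⊗ₜ[R] (χ : S) - (φ χ) ⊗ₜ[R] (1 : S)})
    (θ : S →+* (S ⊗[R] S) ⧸ J)
    (hθ : θ = (Ideal.Quotient.mk J).comp Algebra.TensorProduct.includeLeftRingHom)
    (I : Ideal R) (hI : I = Ideal.span {x : R | ∃ c : R, x = c - φR c}) :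
    Function.Surjective θ ∧ RingHom.ker θ = I.map (algebraMap R S) := by
  -- Key lemma: for every `s : S`, `1 ⊗ s - φ s ⊗ 1 ∈ J`.
  have key : ∀ s : S, (1 : S) ⊗ₜ[R] s - (φ s) ⊗ₜ[R] (1 : S) ∈ J := by
    intro s
    have hs : s ∈ Subring.closure ((fun u : Sˣ => (u : S)) '' U) := by
      rw [hgen]; trivial
    induction hs using Subring.closure_induction with
    | mem x hx =>
        obtain ⟨χ, hχ, rfl⟩ := hx
        rw [hJ]
        exact Ideal.subset_span ⟨χ, hχ, rfl⟩
    | zero => simp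
    | one => simp
    | add x y hx hy px py =>
        have := J.add_mem px py
        simpa [tmul_add, add_tmul, sub_add_sub_comm] using this
    | neg x hx px =>
        have heq : (1 : S) ⊗ₜ[R] (-x) - (φ (-x)) ⊗ₜ[R] (1 : S) =
            -((1 : S) ⊗ₜ[R] x - (φ x) ⊗ₜ[R] (1 : S)) := by
          rw [map_neg, tmul_neg, neg_tmul]; ring
        rw [heq]; exact J.neg_mem px
    | mul x y hx hy px py =>
        have h1 : ((1 : S) ⊗ₜ[R] x) * ((1 : S) ⊗ₜ[R] y - (φ y) ⊗ₜ[R] (1 : S)) ∈ J :=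
          J.mul_mem_left _ py
        have h2 : ((1 : S) ⊗ₜ[R] x - (φ x) ⊗ₜ[R] (1 : S)) * ((φ y) ⊗ₜ[R] (1 : S)) ∈ J :=
          J.mul_mem_right _ px
        have hsum := J.add_mem h1 h2
        have heq : ((1 : S) ⊗ₜ[R] x) * ((1 : S) ⊗ₜ[R] y - (φ y) ⊗ₜ[R] (1 : S)) +
            ((1 : S) ⊗ₜ[R] x - (φ x) ⊗ₜ[R] (1 : S)) * ((φ y) ⊗ₜ[R] (1 : S)) =
            (1 : S) ⊗ₜ[R] (x * y) - (φ (x * y)) ⊗ₜ[R] (1 : S) := by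
          simp only [mul_sub, sub_mul, Algebra.TensorProduct.tmul_mul_tmul, one_mul, mul_one,
            map_mul]
          ring
        rwa [heq] at hsum
  have hθapp : ∀ f : S, θ f = Ideal.Quotient.mk J (f ⊗ₜ[R] (1 : S)) := by
    intro f; rw [hθ]; rfl
  have hright : ∀ g : S, Ideal.Quotient.mk J ((1 : S) ⊗ₜ[R] g) = θ (φ g) := by
    intro g
    rw [hθapp]
    exact (Ideal.Quotient.mk_eq_mk_iff_sub_mem _ _).2 (key g)
  constructor
  · -- Surjectivity
    intro x
    obtain ⟨y, rfl⟩ := Ideal.Quotient.mk_surjective x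
    induction y using TensorProduct.induction_on with
    | zero => exact ⟨0, by simp⟩
    | tmul f g =>
        refine ⟨f * φ g, ?_⟩
        rw [map_mul, hθapp, ← hright, ← map_mul, Algebra.TensorProduct.tmul_mul_tmul,
          one_mul, mul_one]
    | add a b ha hb =>
        obtain ⟨u, hu⟩ := ha
        obtain ⟨v, hv⟩ := hb
        exact ⟨u + v, by rw [map_add, hu, hv, map_add]⟩
  · -- Kernel
    set IS := I.map (algebraMap R S) with hIS
    have hISmem : ∀ c : R, algebraMap R S (c - φR c) ∈ IS := by
      intro c
      exact Ideal.mem_map_of_mem _ (hI ▸ Ideal.subset_span ⟨c, rfl⟩)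
    let mkq : S →ₐ[R] S ⧸ IS := Ideal.Quotient.mkₐ R IS
    let g : S →ₐ[R] S ⧸ IS :=
      { toRingHom := (Ideal.Quotient.mk IS).comp φ
        commutes' := by
          intro r
          show Ideal.Quotient.mk IS (φ (algebraMap R S r)) = algebraMap R (S ⧸ IS) r
          have hq : algebraMap R (S ⧸ IS) r =
              Ideal.Quotient.mk IS (algebraMap R S r) := rfl
          rw [hφ, hq, Ideal.Quotient.mk_eq_mk_iff_sub_mem, ← map_sub]
          simpa using IS.neg_mem (hISmem r) }
    let ψ : S ⊗[R] S →ₐ[R] S ⧸ IS := Algebra.TensorProduct.productMap mkq g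
    have hψJ : ∀ x ∈ J, ψ x = 0 := by
      intro x hx
      rw [hJ] at hx
      refine Submodule.span_induction ?_ (by simp) (fun a b _ _ ha hb => by
        rw [map_add, ha, hb, add_zero]) (fun a b _ hb => by
        rw [smul_eq_mul, map_mul, hb, mul_zero]) hx
      rintro _ ⟨χ, hχ, rfl⟩
      simp only [map_sub, ψ, Algebra.TensorProduct.productMap_apply_tmul, map_one,
        one_mul, mul_one]
      rw [sub_eq_zero]
      rfl
    let ψ' : (S ⊗[R] S) ⧸ J →+* S ⧸ IS := Ideal.Quotient.lift J ψ.toRingHom hψJ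
    have hψ'θ : ∀ f : S, ψ' (θ f) = Ideal.Quotient.mk IS f := by
      intro f
      rw [hθapp]
      show ψ (f ⊗ₜ[R] 1) = _
      simp [ψ, Algebra.TensorProduct.productMap_apply_tmul, mkq]
    ext f
    constructor
    · intro hf
      have h0 : θ f = 0 := hf
      have h1 := hψ'θ f
      rw [h0, map_zero] at h1
      exact (Ideal.Quotient.eq_zero_iff_mem).1 h1.symm
    · intro hf
      show θ f = 0
      rw [hθapp, Ideal.Quotient.eq_zero_iff_mem]
      have main : ∀ f ∈ IS, f ⊗ₜ[R] (1 : S) ∈ J := by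
        intro f hf
        rw [hIS, hI, Ideal.map_span] at hf
        refine Submodule.span_induction ?_ (by simp) (fun a b _ _ ha hb => by
          rw [add_tmul]; exact J.add_mem ha hb) (fun a b _ hb => by
          rw [smul_eq_mul, ← mul_one (1 : S), ← Algebra.TensorProduct.tmul_mul_tmul]
          exact J.mul_mem_left _ hb) hf
        rintro _ ⟨_, ⟨c, rfl⟩, rfl⟩
        have h1 : algebraMap R S (c - φR c) ⊗ₜ[R] (1 : S) =
            ((algebraMap R S c) ⊗ₜ[R] (1 : S) - (1 : S) ⊗ₜ[R] (algebraMap R S c)) +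
            ((1 : S) ⊗ₜ[R] (algebraMap R S c) - (φ (algebraMap R S c)) ⊗ₜ[R] (1 : S)) := by
          rw [hφ, map_sub, sub_tmul]
          abel
        have h2 : (algebraMap R S c) ⊗ₜ[R] (1 : S) = (1 : S) ⊗ₜ[R] (algebraMap R S c) := by
          rw [Algebra.algebraMap_eq_smul_one, smul_tmul]
        rw [h1, h2, sub_self, zero_add]
        exact key _
      exact main f hf
end

section
/- Let A be a commutative ring, M a monoid written multiplicatively, and S = A[M] a commutative monoid algebra over A, with φ: S → S an A-algebra endomorphism sending each monoid element m to m^p for a fixed natural number p ≥ 1. Define θ: S → (S ⊗_A S)/J where J is the ideal generated by {1 ⊗ m - φ(m) ⊗ 1 : m ∈ M}, by θ(f) = (f ⊗ 1 mod J). Then the map σ: (S ⊗_A S)/J → S/ker(θ) induced by f ⊗ g ↦ φ(g)·f (mod ker θ) is a well-defined left inverse of the map induced by θ, and hence θ is surjective. -/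
set_option maxHeartbeats 1000000
set_option synthInstance.maxHeartbeats 400000

open TensorProduct in
/-- The left-inverse construction in the proof of Proposition
`prop-torus-action-quotient-4`: for `S = A[M]` a commutative monoid algebra,
`φ` an `A`-algebra endomorphism with `φ(m) = m^p` (`p ≥ 1`) on monoid elements,
`J ⊆ S ⊗_A S` the ideal generated by `{1 ⊗ m - φ(m) ⊗ 1 : m ∈ M}` and
`θ(f) = f ⊗ 1 mod J`, the assignment `f ⊗ g ↦ φ(g)·f (mod ker θ)` gives a
well-defined ring homomorphism `σ : (S ⊗_A S)/J → S/ker θ` which is a left inverse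
of the map induced by `θ`; hence `θ` is surjective. -/
theorem sigma_left_inverse_of_theta
    (A M : Type*) [CommRing A] [CommMonoid M]
    (p : ℕ) (hp : 1 ≤ p)
    (φ : MonoidAlgebra A M →ₐ[A] MonoidAlgebra A M)
    (hφ : ∀ m : M, φ (MonoidAlgebra.of A M m) = (MonoidAlgebra.of A M m) ^ p)
    (J : Ideal (MonoidAlgebra A M ⊗[A] MonoidAlgebra A M))
    (hJ : J = Ideal.span
      {x | ∃ m : M, x = (1 : MonoidAlgebra A M) ⊗ₜ[A] (MonoidAlgebra.of A M m)
        - (φ (MonoidAlgebra.of A M m)) ⊗ₜ[A] (1 : MonoidAlgebra A M)})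
    (θ : MonoidAlgebra A M →+* (MonoidAlgebra A M ⊗[A] MonoidAlgebra A M) ⧸ J)
    (hθ : θ = (Ideal.Quotient.mk J).comp Algebra.TensorProduct.includeLeftRingHom) :
    (∃ σ : (MonoidAlgebra A M ⊗[A] MonoidAlgebra A M) ⧸ J →+*
        MonoidAlgebra A M ⧸ RingHom.ker θ,
      (∀ f g : MonoidAlgebra A M,
        σ (Ideal.Quotient.mk J (f ⊗ₜ[A] g)) = Ideal.Quotient.mk (RingHom.ker θ) (φ g * f)) ∧
      (∀ f : MonoidAlgebra A M, σ (θ f) = Ideal.Quotient.mk (RingHom.ker θ) f)) ∧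
    Function.Surjective θ := by
  set S := MonoidAlgebra A M
  have hθf : ∀ f : S, θ f = Ideal.Quotient.mk J (f ⊗ₜ[A] (1 : S)) := by
    intro f; rw [hθ]; rfl
  -- the algebra map S ⊗ S → S, f ⊗ g ↦ f * φ g
  let τ₀ : S ⊗[A] S →ₐ[A] S :=
    (Algebra.TensorProduct.lmul' A).comp
      (Algebra.TensorProduct.map (AlgHom.id A S) φ)
  have hτ₀ : ∀ f g : S, τ₀ (f ⊗ₜ[A] g) = f * φ g := fun f g => rfl
  let τ : S ⊗[A] S →+* S ⧸ RingHom.ker θ :=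
    (Ideal.Quotient.mk (RingHom.ker θ)).comp τ₀.toRingHom
  have hτ : ∀ f g : S, τ (f ⊗ₜ[A] g) =
      Ideal.Quotient.mk (RingHom.ker θ) (f * φ g) := fun f g => rfl
  have hJτ : ∀ a ∈ J, τ a = 0 := by
    intro a ha
    rw [hJ] at ha
    refine Submodule.span_induction ?_ ?_ ?_ ?_ ha
    · rintro x ⟨m, rfl⟩
      simp [τ, hτ₀, map_sub]
    · simp
    · intro x y _ _ hx hy; simp [map_add, hx, hy]
    · intro x y _ hy; simp [map_mul, hy]
  refine ⟨⟨Ideal.Quotient.lift J τ hJτ, ?_, ?_⟩, ?_⟩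
  · intro f g
    rw [Ideal.Quotient.lift_mk J τ hJτ, hτ, mul_comm]
  · intro f
    rw [hθf, Ideal.Quotient.lift_mk J τ hJτ, hτ, map_one, mul_one]
  · -- key congruence: 1 ⊗ g ≡ φ g ⊗ 1 mod J
    have key : ∀ g : S, Ideal.Quotient.mk J ((1 : S) ⊗ₜ[A] g)
        = Ideal.Quotient.mk J (φ g ⊗ₜ[A] (1 : S)) := by
      have : ((Ideal.Quotient.mkₐ A J).comp
            (Algebra.TensorProduct.includeRight : S →ₐ[A] S ⊗[A] S))
          = (Ideal.Quotient.mkₐ A J).comp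
            ((Algebra.TensorProduct.includeLeft : S →ₐ[A] S ⊗[A] S).comp φ) := by
        apply MonoidAlgebra.algHom_ext
        intro m
        simp only [AlgHom.comp_apply, Algebra.TensorProduct.includeRight_apply,
          Algebra.TensorProduct.includeLeft_apply, Ideal.Quotient.mkₐ_eq_mk]
        rw [Ideal.Quotient.eq]
        rw [hJ]
        exact Ideal.subset_span ⟨m, rfl⟩
        exact Subsingleton.elim _ _
      intro g
      have := congrArg (fun ψ => ψ g) this
      simpa using this
    intro x
    obtain ⟨t, rfl⟩ := Ideal.Quotient.mk_surjective x
    induction t using TensorProduct.induction_on with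
    | zero => exact ⟨0, by simp⟩
    | tmul f g =>
      refine ⟨f * φ g, ?_⟩
      rw [hθf]
      have h1 : (f * φ g) ⊗ₜ[A] (1 : S) = (f ⊗ₜ[A] (1 : S)) * ((φ g) ⊗ₜ[A] (1 : S)) := by
        rw [Algebra.TensorProduct.tmul_mul_tmul, mul_one]
      rw [h1, map_mul, ← key, ← map_mul, Algebra.TensorProduct.tmul_mul_tmul,
        one_mul, mul_one]
    | add a b ha hb =>
      obtain ⟨fa, hfa⟩ := ha
      obtain ⟨fb, hfb⟩ := hb
      exact ⟨fa + fb, by rw [θ.map_add, hfa, hfb, (Ideal.Quotient.mk J).map_add]⟩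
end

section
/- Let R = Z[x, x⁻¹] with the Z/2-action swapping x and x⁻¹. Let A be a commutative ring (playing the role of K₀^G(X)) and consider the module M = A ⊕ A·x ≅ A ⊗_{Z[x+x⁻¹]} Z[x,x⁻¹], where x + x⁻¹ acts on A as multiplication by 2, and let the Z/2-action on M be determined by w(1) = 1 and w(x) = x⁻¹ = (x + x⁻¹) - x. Then the invariant submodule is M^{Z/2} = A ⊕ {b ∈ A : 2b = 0}·x. In particular, if A has nonzero 2-torsion, then M^{Z/2} strictly contains the image of A (i.e., A·1). -/
/-- Example `example-weyl-action`: for `G = SL₂`, `M = K₀^T(X) ≅ A ⊕ A·x` with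
`x + x⁻¹` acting on `A` as multiplication by `2`, the Weyl group generator acts by
`w(a + bx) = (a + 2b) - bx` (since `w(x) = x⁻¹ = (x + x⁻¹)·1 - x`).  The invariant
submodule is `{(a, b) : 2b = 0} = A ⊕ {b : 2b = 0}·x`; in particular, if `A` has
nonzero 2-torsion then the invariants strictly contain the image `A·1` of `A`. -/
theorem weyl_invariants_sl2_example
    (A : Type*) [CommRing A]
    (w : A × A ≃+ A × A)
    (hw : ∀ a b : A, w (a, b) = (a + 2 * b, -b)) :
    (∀ m : A × A, w m = m ↔ 2 * m.2 = 0) ∧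
    ((∃ b : A, b ≠ 0 ∧ 2 * b = 0) →
      ∃ m : A × A, w m = m ∧ ∀ a : A, m ≠ (a, 0)) := by
  have key : ∀ m : A × A, w m = m ↔ 2 * m.2 = 0 := by
    intro ⟨a, b⟩
    rw [hw a b, Prod.mk.injEq]
    constructor
    · rintro ⟨h1, -⟩; linear_combination h1
    · intro h
      constructor
      · linear_combination h
      · linear_combination -h
  refine ⟨key, ?_⟩
  rintro ⟨b, hb, h2b⟩
  refine ⟨(0, b), (key _).mpr h2b, ?_⟩
  intro a h
  exact hb (congrArg Prod.snd h)
end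

section
/- Let X be a finitely generated free abelian group and S ⊆ X a subgroup such that X/S is free. Then there exist elements χ₁, ..., χₙ ∈ S forming a basis of S, and defining the descending chain of subgroups by successively taking kernels, one obtains that the ideal (1 - e^{χ₁}, ..., 1 - e^{χₙ}) of the group ring Z[X] equals the ideal generated by {1 - e^{χ} : χ ∈ S}. -/
/-- The inductive reduction in the proof of Corollary `cor-subtor-quot-ktheory`:
for `X` a finitely generated free abelian group and `S ⊆ X` a subgroup with `X/S`
free, there is a finite basis `χ₁, …, χₙ` of `S` such that the ideal
`(1 - e^{χ₁}, …, 1 - e^{χₙ})` of the group ring `ℤ[X]` equals the ideal generated by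
all `1 - e^χ` with `χ ∈ S`. -/
theorem finite_generation_of_kernel_ideal
    (X : Type*) [AddCommGroup X] [Module.Free ℤ X] [Module.Finite ℤ X]
    (S : AddSubgroup X) (hfree : Module.Free ℤ (X ⧸ S)) :
    ∃ (n : ℕ) (χ : Fin n → X) (b : Module.Basis (Fin n) ℤ S),
      (∀ i, χ i ∈ S) ∧ (∀ i, (b i : X) = χ i) ∧
      Ideal.span ((fun i => 1 - AddMonoidAlgebra.single (χ i) (1 : ℤ)) '' Set.univ)
        = Ideal.span {x : AddMonoidAlgebra ℤ X |
            ∃ χ' ∈ S, x = 1 - AddMonoidAlgebra.single χ' (1 : ℤ)} := by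
  classical
  obtain ⟨ι, bX⟩ := Module.Free.exists_basis (R := ℤ) (M := X)
  haveI : Finite ι := Module.Finite.finite_basis bX
  obtain ⟨n, b⟩ := Submodule.basisOfPid bX S.toIntSubmodule
  refine ⟨n, fun i => (b i : X), b, fun i => (b i).2, fun i => rfl, ?_⟩
  apply le_antisymm
  · refine Ideal.span_le.mpr ?_
    rintro x ⟨i, -, rfl⟩
    exact Ideal.subset_span ⟨(b i : X), (b i).2, rfl⟩
  · refine Ideal.span_le.mpr ?_
    rintro x ⟨χ', hχ', rfl⟩
    set I := Ideal.span ((fun i => 1 - AddMonoidAlgebra.single ((b i : X)) (1 : ℤ)) '' Set.univ)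
    -- the set of χ with 1 - e^χ ∈ I is a subgroup
    have key : ∀ a ∈ AddSubgroup.closure (Set.range fun i => (b i : X)),
        (1 : AddMonoidAlgebra ℤ X) - AddMonoidAlgebra.single a 1 ∈ I := by
      intro a ha
      induction ha using AddSubgroup.closure_induction with
      | mem y hy =>
        obtain ⟨i, rfl⟩ := hy
        exact Ideal.subset_span ⟨i, Set.mem_univ i, rfl⟩
      | zero =>
        rw [AddMonoidAlgebra.one_def, sub_self]
        exact zero_mem I
      | add y z hy hz ihy ihz =>
        have : (1 : AddMonoidAlgebra ℤ X) - AddMonoidAlgebra.single (y + z) 1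
            = (1 - AddMonoidAlgebra.single y 1)
              + AddMonoidAlgebra.single y 1 * (1 - AddMonoidAlgebra.single z 1) := by
          rw [mul_sub, mul_one, AddMonoidAlgebra.single_mul_single, one_mul]
          ring
        rw [this]
        exact add_mem ihy (Ideal.mul_mem_left _ _ ihz)
      | neg y hy ihy =>
        have : (1 : AddMonoidAlgebra ℤ X) - AddMonoidAlgebra.single (-y) 1
            = - (AddMonoidAlgebra.single (-y) 1 * (1 - AddMonoidAlgebra.single y 1)) := by
          rw [mul_sub, mul_one, AddMonoidAlgebra.single_mul_single, one_mul, neg_add_cancel,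
            ← AddMonoidAlgebra.one_def]
          ring
        rw [this]
        exact neg_mem (Ideal.mul_mem_left _ _ ihy)
    apply key
    have h1 : χ' ∈ (Submodule.span ℤ (Set.range ⇑b)).map S.toIntSubmodule.subtype :=
      Submodule.mem_map_of_mem (r := (⟨χ', hχ'⟩ : S.toIntSubmodule))
        (by rw [b.span_eq]; trivial)
    rw [Submodule.map_span] at h1
    have h2 : S.toIntSubmodule.subtype '' Set.range ⇑b = Set.range fun i => ((b i : X)) := by
      rw [← Set.range_comp]; rfl
    rw [h2] at h1
    rw [← Submodule.span_int_eq_addSubgroupClosure]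
    exact h1
end

section
/- Let C be a commutative ring and let A ⊆ B ⊆ C be subrings such that C is free of finite rank n over A and free of rank n over B, C is faithfully flat over A, and A is a direct summand of C as an A-module. Then A = B. -/
open TensorProduct

/-- Brokemper's rank-comparison lemma [brokemper2016chow, 1.4]: if `A ⊆ B ⊆ C` are
subrings (here: `ℤ`-subalgebras) of a commutative ring `C` such that `C` is free of
the same finite rank `n ≥ 1` over both `A` and `B`, `C` is faithfully flat over `A`,
and `A` is a direct summand of `C` as an `A`-module (i.e. the inclusion admits an
`A`-linear retraction), then `A = B`. -/
theorem rank_comparison_subrings_eq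
    (C : Type*) [CommRing C] (A B : Subalgebra ℤ C) (hAB : A ≤ B)
    (n : ℕ) (hn : 1 ≤ n)
    (bA : Module.Basis (Fin n) A C) (bB : Module.Basis (Fin n) B C)
    [Module.FaithfullyFlat A C]
    (π : C →ₗ[A] A) (hπ : ∀ a : A, π (a : C) = a) :
    A = B := by
  classical
  -- the coordinate map with respect to the `B`-basis, as an `A`-linear map
  let coordMap : C →ₗ[A] (Fin n → C) :=
    { toFun := fun y i => (bB.repr y i : C)
      map_add' := by intro x y; ext i; simp
      map_smul' := by
        intro a y
        ext i
        have h1 : a • y = (⟨(a : C), hAB a.2⟩ : B) • y := by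
          rw [Algebra.smul_def, Algebra.smul_def]; rfl
        have h2 : bB.repr ((⟨(a : C), hAB a.2⟩ : B) • y)
            = (⟨(a : C), hAB a.2⟩ : B) • bB.repr y := map_smul _ _ _
        show ((bB.repr (a • y)) i : C) = a • ((bB.repr y) i : C)
        rw [h1, h2, Finsupp.smul_apply, smul_eq_mul, Subalgebra.coe_mul,
          Algebra.smul_def a (((bB.repr y) i : C))]
        rfl }
  -- extend to a `C`-linear map on `C ⊗[A] C`
  let ψ : C ⊗[A] C →ₗ[C] (Fin n → C) := coordMap.liftBaseChange C
  have hψ_tmul : ∀ (x y : C), ψ (x ⊗ₜ[A] y) = x • (fun i => (bB.repr y i : C)) :=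
    fun x y => rfl
  -- `ψ` is surjective
  have hsurj : Function.Surjective ψ := by
    intro v
    refine ⟨∑ i, v i • ((1 : C) ⊗ₜ[A] (bB i : C)), ?_⟩
    rw [map_sum]
    ext j
    simp only [map_smul, hψ_tmul, one_smul]
    rw [Finset.sum_apply]
    simp only [Pi.smul_apply, Module.Basis.repr_self, smul_eq_mul]
    rw [Finset.sum_eq_single j]
    · simp
    · intro i _ hij
      simp [Finsupp.single_apply, hij]
    · simp
  -- `ψ` is injective: it induces a surjective endomorphism of `Fin n → C`
  have hinj : Function.Injective ψ := by
    let e : C ⊗[A] C ≃ₗ[C] (Fin n → C) := (bA.baseChange C).equivFun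
    let θ : (Fin n → C) →ₗ[C] (Fin n → C) := ψ ∘ₗ (e.symm : (Fin n → C) →ₗ[C] C ⊗[A] C)
    have hθ : Function.Surjective θ := fun v => by
      obtain ⟨x, hx⟩ := hsurj v
      exact ⟨e x, by simp [θ, hx]⟩
    have hθinj : Function.Injective θ :=
      OrzechProperty.injective_of_surjective_endomorphism θ hθ
    intro x y hxy
    have : θ (e x) = θ (e y) := by simp [θ, hxy]
    have := hθinj this
    exact e.injective this
  -- conclude `B ≤ A`
  refine le_antisymm hAB fun b hb => ?_
  have hb1 : ψ ((b : C) ⊗ₜ[A] (1 : C)) = ψ ((1 : C) ⊗ₜ[A] (b : C)) := by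
    have hbs : (b : C) = (⟨b, hb⟩ : B) • (1 : C) := by
      rw [Algebra.smul_def]; simp
    ext j
    rw [hψ_tmul, hψ_tmul]
    simp only [Pi.smul_apply, smul_eq_mul, one_mul]
    conv_rhs => rw [hbs]
    rw [map_smul]
    simp [Algebra.smul_def]
  have htmul : (b : C) ⊗ₜ[A] (1 : C) = (1 : C) ⊗ₜ[A] (b : C) := hinj hb1
  -- apply the retraction
  let g : C ⊗[A] C →ₗ[C] C := ((Algebra.linearMap A C) ∘ₗ π).liftBaseChange C
  have hg := congrArg g htmul
  have hπ1 : π (1 : C) = 1 := by simpa using hπ 1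
  have hgl : g ((b : C) ⊗ₜ[A] (1 : C)) = b := by
    show (b : C) • (algebraMap A C (π (1 : C))) = b
    rw [hπ1]
    simp
  have hgr : g ((1 : C) ⊗ₜ[A] (b : C)) = (π (b : C) : C) := by
    show (1 : C) • (algebraMap A C (π (b : C))) = _
    simp
  rw [hgl, hgr] at hg
  rw [hg]
  exact SetLike.coe_mem _
end
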